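/- Let c be a far-polar mapping of the 4-cycle C_4 to O_r. Then the winding number of the directed extension c^D of c on C_4 (following the clockwise orientation along each directed edge) is 2. -/

import Mathlib

/-!
Write `a i` for the clockwise arc from `c i` to `c (i+1)`. Going once around the cycle returns
to the start, so `∑ a i` is an integer multiple `k r` of the circumference; `k` is the winding
number. Far-polarity at a vertex `i` forces `r/2 < a (i-1) + a i < 3r/2`: if the two arcs do
not wrap past `c (i-1)` their sum is the clockwise arc from `c (i-1)` to `c (i+1)`, which must
then be the larger one, and if they do wrap, the sum exceeds `r` by the smaller of the two arcs.
Applying this at the two opposite vertices `0` and `2` of `C_4` gives `r < k r < 3r`, so `k = 2`.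
-/

open scoped Classical

/-- The representative in `[0, r)` of a point of the circle `O_r` (of circumference `r`),
i.e. the clockwise arc length from the base point `0`. -/
noncomputable def dlift (r : ℝ) (hr : 0 < r) (x : AddCircle r) : ℝ :=
  haveI : Fact (0 < r) := ⟨hr⟩
  ((AddCircle.equivIco r 0 x : Set.Ico (0 : ℝ) (0 + r)) : ℝ)

/-- The representative in `(-r/2, r/2]` of a point of the circle `O_r`: the signed length of
the shortest arc from the base point (positive = clockwise). -/
noncomputable def slift (r : ℝ) (hr : 0 < r) (x : AddCircle r) : ℝ :=
  haveI : Fact (0 < r) := ⟨hr⟩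
  ((AddCircle.equivIoc r (-(r / 2)) x : Set.Ioc (-(r / 2)) (-(r / 2) + r)) : ℝ)

/-- A mapping `c` of the vertices of the cycle `C_n` to the circle `O_r` is far-polar if for
each `i` the points `c (i-1)` and `c (i+1)` partition `O_r` into two arcs of unequal lengths
and `c i` lies strictly inside the larger arc.  Here `dlift r hr (c (i+1) - c (i-1))` is the
length of the clockwise arc from `c (i-1)` to `c (i+1)`. -/
def FarPolarCycle (n : ℕ) (r : ℝ) (hr : 0 < r) (c : ZMod n → AddCircle r) : Prop :=
  ∀ i : ZMod n,
    dlift r hr (c (i + 1) - c (i - 1)) ≠ r / 2 ∧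
    (if r / 2 < dlift r hr (c (i + 1) - c (i - 1)) then
      0 < dlift r hr (c i - c (i - 1)) ∧
        dlift r hr (c i - c (i - 1)) < dlift r hr (c (i + 1) - c (i - 1))
    else
      dlift r hr (c (i + 1) - c (i - 1)) < dlift r hr (c i - c (i - 1)))

open Finset

section Arcs

variable {r : ℝ} (hr : 0 < r)

lemma dlift_mem_Ico (x : AddCircle r) : dlift r hr x ∈ Set.Ico 0 r := by
  have : Fact (0 < r) := ⟨hr⟩
  simpa [dlift] using (AddCircle.equivIco r 0 x).2

lemma coe_dlift (x : AddCircle r) : ((dlift r hr x : ℝ) : AddCircle r) = x := by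
  have : Fact (0 < r) := ⟨hr⟩
  exact (AddCircle.equivIco r 0).symm_apply_apply x

lemma coe_sum_dlift {ι : Type*} (s : Finset ι) (x : ι → AddCircle r) :
    ((∑ i ∈ s, dlift r hr (x i) : ℝ) : AddCircle r) = ∑ i ∈ s, x i := by
  rw [← QuotientAddGroup.mk'_apply, map_sum]
  exact sum_congr rfl fun i _ => coe_dlift hr (x i)

lemma exists_int_mul_of_coe_eq_zero {a : ℝ} (ha : (a : AddCircle r) = 0) :
    ∃ k : ℤ, a = k * r := by
  obtain ⟨k, hk⟩ := (AddCircle.coe_eq_zero_iff r).mp ha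
  exact ⟨k, by rw [← hk, zsmul_eq_mul]⟩

lemma dlift_add_eq_or (x y : AddCircle r) :
    dlift r hr (x + y) = dlift r hr x + dlift r hr y ∨
      dlift r hr (x + y) = dlift r hr x + dlift r hr y - r := by
  obtain ⟨k, hk⟩ : ∃ k : ℤ, dlift r hr x + dlift r hr y - dlift r hr (x + y) = k * r := by
    refine exists_int_mul_of_coe_eq_zero ?_
    rw [AddCircle.coe_sub, AddCircle.coe_add, coe_dlift, coe_dlift, coe_dlift, sub_self]
  obtain ⟨hx0, hx1⟩ := dlift_mem_Ico hr x
  obtain ⟨hy0, hy1⟩ := dlift_mem_Ico hr y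
  obtain ⟨hxy0, hxy1⟩ := dlift_mem_Ico hr (x + y)
  have hk0 : (-1 : ℝ) < k := lt_of_mul_lt_mul_right (by linarith) hr.le
  have hk1 : (k : ℝ) < 2 := lt_of_mul_lt_mul_right (by linarith) hr.le
  obtain rfl | rfl : k = 0 ∨ k = 1 := by
    have : -1 < k := by exact_mod_cast hk0
    have : k < 2 := by exact_mod_cast hk1
    omega
  · left; push_cast at hk; linarith
  · right; push_cast at hk; linarith

lemma dlift_add_dlift_mem_Ioo_of_farPolar {p q s : AddCircle r}
    (hne : dlift r hr (s - p) ≠ r / 2)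
    (h : if r / 2 < dlift r hr (s - p) then
        0 < dlift r hr (q - p) ∧ dlift r hr (q - p) < dlift r hr (s - p)
      else dlift r hr (s - p) < dlift r hr (q - p)) :
    dlift r hr (q - p) + dlift r hr (s - q) ∈ Set.Ioo (r / 2) (3 * (r / 2)) := by
  obtain ⟨hx0, hx1⟩ := dlift_mem_Ico hr (s - q)
  obtain ⟨hy0, hy1⟩ := dlift_mem_Ico hr (q - p)
  have hsplit : s - p = (s - q) + (q - p) := by abel
  rw [hsplit] at hne h
  obtain ⟨hxy0, hxy1⟩ := dlift_mem_Ico hr (s - q + (q - p))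
  rcases dlift_add_eq_or hr (s - q) (q - p) with hadd | hadd <;> split_ifs at h with hgt
  · constructor <;> linarith
  · linarith
  · linarith [h.2]
  · have hlt := lt_of_le_of_ne (not_lt.mp hgt) hne
    constructor <;> linarith

lemma exists_sum_dlift_cycle_eq_int_mul {n : ℕ} (c : ZMod n → AddCircle r) :
    ∃ k : ℤ, ∑ j ∈ range n, dlift r hr (c ((j + 1 : ℕ) : ZMod n) - c ((j : ℕ) : ZMod n))
      = k * r := by
  refine exists_int_mul_of_coe_eq_zero ?_
  rw [coe_sum_dlift, sum_range_sub (fun j : ℕ => c j), ZMod.natCast_self, Nat.cast_zero, sub_self]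

lemma FarPolarCycle.dlift_add_dlift_mem_Ioo {n : ℕ} {c : ZMod n → AddCircle r}
    (hc : FarPolarCycle n r hr c) (i : ZMod n) :
    dlift r hr (c i - c (i - 1)) + dlift r hr (c (i + 1) - c i) ∈ Set.Ioo (r / 2) (3 * (r / 2)) :=
  dlift_add_dlift_mem_Ioo_of_farPolar hr (hc i).1 (hc i).2

end Arcs

/-- Let `c` be a far-polar mapping of the 4-cycle `C_4` to `O_r`.  Then the winding number of
the directed (clockwise) extension `c^D` of `c` is `2`:  the total clockwise arc length
traversed along the directed cycle equals `2 * r`. -/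
theorem winding_C4_directed (r : ℝ) (hr : 0 < r)
    (c : ZMod 4 → AddCircle r) (hc : FarPolarCycle 4 r hr c) :
    (∑ j ∈ Finset.range 4, dlift r hr (c ((j + 1 : ℕ) : ZMod 4) - c ((j : ℕ) : ZMod 4)))
      = 2 * r := by
  obtain ⟨k, hk⟩ := exists_sum_dlift_cycle_eq_int_mul hr c
  have h0 := hc.dlift_add_dlift_mem_Ioo hr 0
  have h2 := hc.dlift_add_dlift_mem_Ioo hr 2
  rw [show (0 - 1 : ZMod 4) = 3 from rfl, zero_add] at h0
  rw [show (2 - 1 : ZMod 4) = 1 from rfl, show (2 + 1 : ZMod 4) = 3 from rfl] at h2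
  have hsum : ∑ j ∈ range 4, dlift r hr (c ((j + 1 : ℕ) : ZMod 4) - c ((j : ℕ) : ZMod 4)) =
      (dlift r hr (c 0 - c 3) + dlift r hr (c 1 - c 0)) +
        (dlift r hr (c 2 - c 1) + dlift r hr (c 3 - c 2)) := by
    simp only [sum_range_succ, sum_range_zero]
    norm_num
    rw [show (4 : ZMod 4) = 0 from rfl]
    ring
  rw [hsum] at hk
  obtain ⟨hlo0, hhi0⟩ := h0
  obtain ⟨hlo2, hhi2⟩ := h2
  have hk1 : (1 : ℝ) < k := lt_of_mul_lt_mul_right (by linarith) hr.le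
  have hk3 : (k : ℝ) < 3 := lt_of_mul_lt_mul_right (by linarith) hr.le
  obtain rfl : k = 2 := by
    have : 1 < k := by exact_mod_cast hk1
    have : k < 3 := by exact_mod_cast hk3
    omega
  rw [hsum, hk]
  norm_num
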